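/- Let m be a positive integer and x a real number. Define polynomials R_n ∈ ℝ[z] by R_0 = 1, R_1 = z − 2x, and R_n = (z − (2n·x + (n−1)m))·R_{n−1} − (n−1)·n·x·(x+m)·R_{n−2} for n ≥ 2. Let L : ℝ[z] → ℝ be the unique linear functional with L(z^n) = ω̃_n(x,m) for all n ≥ 0. Then L(R_i · R_j) = 0 whenever i ≠ j; that is, the modified bivariate geometric polynomials ω̃_n(x,m) are the moments of the orthogonal polynomial family (R_n). -/

import Mathlib

/-- Stirling numbers of the second kind:
`S(n,k) = (1/k!) ∑_{j=0}^k (−1)^{k−j} C(k,j) j^n`. -/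
noncomputable def stirling2 (n k : ℕ) : ℝ :=
  (1 / (k.factorial : ℝ)) *
    ∑ j ∈ Finset.range (k + 1), (-1 : ℝ) ^ (k - j) * (k.choose j) * (j : ℝ) ^ n

/-- Modified bivariate geometric polynomials
`ω̃_n(x,m) = ∑_{k=0}^n (k+1)!·S(n,k)·x^k·m^{n−k}`. -/
noncomputable def geomPolyMod (n : ℕ) (x : ℝ) (m : ℕ) : ℝ :=
  ∑ k ∈ Finset.range (n + 1), ((k + 1).factorial : ℝ) * stirling2 n k * x ^ k * (m : ℝ) ^ (n - k)

/-- `R_0 = 1`, `R_1 = z − 2x`,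
`R_n = (z − (2n·x + (n−1)m))·R_{n−1} − (n−1)·n·x·(x+m)·R_{n−2}` for `n ≥ 2`. -/
noncomputable def geomPolyModOP (m : ℕ) (x : ℝ) : ℕ → Polynomial ℝ
  | 0 => 1
  | 1 => Polynomial.X - Polynomial.C (2 * x)
  | (n + 2) =>
      (Polynomial.X - Polynomial.C (2 * ((n : ℝ) + 2) * x + ((n : ℝ) + 1) * m)) *
          geomPolyModOP m x (n + 1) -
        Polynomial.C (((n : ℝ) + 1) * ((n : ℝ) + 2) * x * (x + m)) * geomPolyModOP m x n

/-!
In the falling factorials `Vₖ = X (X - m) ⋯ (X - (k-1)m)` one has `X ^ n = ∑ₖ S(n,k) m^(n-k) Vₖ`,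
so the moments `ω̃_n(x,m)` say exactly that `L Vₖ = (k+1)! xᵏ`. The three-term recurrence then
gives, by induction on `n`, `L (Vₖ Rₙ) = (k+1)! k(k-1)⋯(k-n+1) xᵏ (x+m)ⁿ`, which vanishes for
`k < n`. Since the `Vₖ` with `k < n` span the polynomials of degree `< n`, `Rₙ` is orthogonal to
all of them, in particular to `R_i` for `i < n`.
-/

open Finset Polynomial

section Stirling

variable {R : Type*} [CommRing R]

theorem sum_neg_one_pow_mul_choose_mul_pow_succ_succ (n k : ℕ) :
    ∑ j ∈ range (k + 2), (-1 : R) ^ (k + 1 - j) * ((k + 1).choose j : R) * (j : R) ^ (n + 1) =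
      (k + 1) *
        (∑ j ∈ range (k + 2), (-1 : R) ^ (k + 1 - j) * ((k + 1).choose j : R) * (j : R) ^ n +
          ∑ j ∈ range (k + 1), (-1 : R) ^ (k - j) * (k.choose j : R) * (j : R) ^ n) := by
  have hshift : ∑ j ∈ range (k + 2), (-1 : R) ^ (k + 1 - j) * (k.choose j : R) * (j : R) ^ n =
      -∑ j ∈ range (k + 1), (-1 : R) ^ (k - j) * (k.choose j : R) * (j : R) ^ n := by
    rw [sum_range_succ, Nat.choose_succ_self, Nat.cast_zero, mul_zero, zero_mul, add_zero,
      ← sum_neg_distrib]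
    refine sum_congr rfl fun j hj => ?_
    rw [Nat.sub_add_comm (mem_range_succ_iff.mp hj), pow_succ]
    ring
  -- `j * C(k+1, j) = (k+1) * (C(k+1, j) - C(k, j))`
  have hterm : ∀ j ∈ range (k + 2),
      (-1 : R) ^ (k + 1 - j) * ((k + 1).choose j : R) * (j : R) ^ (n + 1) =
        (k + 1) * ((-1 : R) ^ (k + 1 - j) * ((k + 1).choose j : R) * (j : R) ^ n) -
          (k + 1) * ((-1 : R) ^ (k + 1 - j) * (k.choose j : R) * (j : R) ^ n) := by
    intro j hj
    have hchoose := congrArg (Nat.cast : ℕ → R) (Nat.choose_mul_succ_eq k j)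
    push_cast [Nat.cast_sub (mem_range_succ_iff.mp hj)] at hchoose
    linear_combination (-1 : R) ^ (k + 1 - j) * (j : R) ^ n * hchoose
  rw [sum_congr rfl hterm, sum_sub_distrib, ← mul_sum, ← mul_sum, hshift]
  ring

theorem sum_neg_one_pow_mul_choose_mul_pow_eq_factorial_mul_stirlingSecond (n k : ℕ) :
    ∑ j ∈ range (k + 1), (-1 : R) ^ (k - j) * (k.choose j : R) * (j : R) ^ n =
      k.factorial * Nat.stirlingSecond n k := by
  induction n generalizing k with
  | zero =>
    have h := (add_pow (1 : R) (-1) k).symm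
    simp only [one_pow, one_mul, add_neg_cancel] at h
    simp only [pow_zero, mul_one, h]
    cases k <;> simp
  | succ n ih =>
    cases k with
    | zero => simp
    | succ k =>
      rw [sum_neg_one_pow_mul_choose_mul_pow_succ_succ, ih, ih, Nat.stirlingSecond_succ_succ,
        Nat.factorial_succ]
      push_cast
      ring

end Stirling

theorem stirling2_eq_stirlingSecond (n k : ℕ) : stirling2 n k = Nat.stirlingSecond n k := by
  rw [stirling2, sum_neg_one_pow_mul_choose_mul_pow_eq_factorial_mul_stirlingSecond]
  field_simp

section StepDescPochhammer

variable {R : Type*} [CommRing R]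

noncomputable def stepDescPochhammer (a : R) (k : ℕ) : R[X] :=
  ∏ i ∈ range k, (X - C (a * i))

@[simp]
theorem stepDescPochhammer_zero (a : R) : stepDescPochhammer a 0 = 1 := prod_range_zero _

theorem X_mul_stepDescPochhammer (a : R) (k : ℕ) :
    X * stepDescPochhammer a k =
      stepDescPochhammer a (k + 1) + C (a * k) * stepDescPochhammer a k := by
  rw [stepDescPochhammer, stepDescPochhammer, prod_range_succ]
  ring

theorem X_pow_eq_sum_stirlingSecond_mul_stepDescPochhammer (a : R) (n : ℕ) :
    (X : R[X]) ^ n =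
      ∑ k ∈ range (n + 1), C (Nat.stirlingSecond n k * a ^ (n - k)) * stepDescPochhammer a k := by
  induction n with
  | zero => simp
  | succ n ih =>
    have hlow : ∑ k ∈ range (n + 1),
          C (Nat.stirlingSecond n k * a ^ (n - k) * (a * k)) * stepDescPochhammer a k =
        ∑ k ∈ range (n + 1), C ((k + 1) * Nat.stirlingSecond n (k + 1) * a ^ (n - k)) *
          stepDescPochhammer a (k + 1) := by
      rw [sum_range_succ', sum_range_succ, Nat.stirlingSecond_eq_zero_of_lt n.lt_succ_self]
      simp only [Nat.cast_zero, mul_zero, map_zero, zero_mul, add_zero]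
      refine sum_congr rfl fun k hk => congrArg (C · * _) ?_
      have hpow : a ^ (n - k) = a ^ (n - (k + 1)) * a := by
        rw [← pow_succ]; congr 1; have := mem_range.mp hk; omega
      rw [hpow]
      push_cast
      ring
    calc (X : R[X]) ^ (n + 1)
        = ∑ k ∈ range (n + 1), C (Nat.stirlingSecond n k * a ^ (n - k)) *
            (X * stepDescPochhammer a k) := by
          rw [pow_succ', ih, mul_sum]
          exact sum_congr rfl fun k _ => by ring
      _ = ∑ k ∈ range (n + 1),
            C (Nat.stirlingSecond n k * a ^ (n - k)) * stepDescPochhammer a (k + 1) +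
          ∑ k ∈ range (n + 1),
            C (Nat.stirlingSecond n k * a ^ (n - k) * (a * k)) * stepDescPochhammer a k := by
          simp only [X_mul_stepDescPochhammer, mul_add, ← sum_add_distrib, C_mul, mul_assoc]
      _ = _ := by
          rw [hlow, ← sum_add_distrib, sum_range_succ' _ (n + 1)]
          simp only [Nat.stirlingSecond_succ_zero, Nat.cast_zero, zero_mul, map_zero, add_zero,
            Nat.stirlingSecond_succ_succ, Nat.succ_sub_succ]
          refine sum_congr rfl fun k _ => ?_
          rw [← add_mul, ← C_add]
          congr 2
          push_cast
          ring

end StepDescPochhammer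

section Moments

variable {R M : Type*} [CommRing R] [AddCommGroup M] [Module R M]

/-- The expansion of `X ^ n` in the `stepDescPochhammer a k` is unitriangular. -/
theorem map_stepDescPochhammer_of_map_X_pow (a : R) (L : R[X] →ₗ[R] M) (c : ℕ → M)
    (hL : ∀ n, L (X ^ n) = ∑ k ∈ range (n + 1), (Nat.stirlingSecond n k * a ^ (n - k)) • c k)
    (k : ℕ) : L (stepDescPochhammer a k) = c k := by
  induction k using Nat.strong_induction_on with
  | _ k ih =>
    have hk := hL k
    rw [X_pow_eq_sum_stirlingSecond_mul_stepDescPochhammer a, map_sum, sum_range_succ,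
      sum_range_succ,
      sum_congr rfl fun j hj => by rw [← smul_eq_C_mul, map_smul, ih j (mem_range.mp hj)],
      ← smul_eq_C_mul, map_smul, Nat.stirlingSecond_self, Nat.sub_self] at hk
    simpa using hk

theorem map_eq_zero_of_mem_degreeLT (a : R) (L : R[X] →ₗ[R] M) {n : ℕ}
    (hL : ∀ k < n, L (stepDescPochhammer a k) = 0) {P : R[X]} (hP : P ∈ degreeLT R n) :
    L P = 0 := by
  classical
  suffices degreeLT R n ≤ LinearMap.ker L from this hP
  rw [degreeLT_eq_span_X_pow, Submodule.span_le]
  intro Q hQ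
  obtain ⟨j, hj, rfl⟩ := mem_image.mp (mem_coe.mp hQ)
  rw [SetLike.mem_coe, LinearMap.mem_ker, X_pow_eq_sum_stirlingSecond_mul_stepDescPochhammer a,
    map_sum]
  refine sum_eq_zero fun k hk => ?_
  have hkn : k < n := (mem_range_succ_iff.mp hk).trans_lt (mem_range.mp hj)
  rw [← smul_eq_C_mul, map_smul, hL k hkn, smul_zero]

theorem LinearMap.map_C_mul (L : R[X] →ₗ[R] R) (a : R) (P : R[X]) : L (C a * P) = a * L P := by
  rw [← smul_eq_C_mul, map_smul, smul_eq_mul]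

end Moments

theorem Nat.cast_descFactorial_succ {S : Type*} [CommRing S] (a b : ℕ) :
    (a.descFactorial (b + 1) : S) = a.descFactorial b * (a - b) := by
  simp only [← descPochhammer_eval_eq_descFactorial, descPochhammer_succ_eval]

theorem geomPolyMod_eq_sum_stirlingSecond (n : ℕ) (x : ℝ) (m : ℕ) :
    geomPolyMod n x m = ∑ k ∈ range (n + 1),
      (Nat.stirlingSecond n k * (m : ℝ) ^ (n - k)) • ((k + 1).factorial * x ^ k) := by
  simp only [geomPolyMod, stirling2_eq_stirlingSecond, smul_eq_mul]
  exact sum_congr rfl fun k _ => by ring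

section GeomPolyModOP

variable (m : ℕ) (x : ℝ)

theorem stepDescPochhammer_mul_geomPolyModOP_add_two (n k : ℕ) :
    stepDescPochhammer (m : ℝ) k * geomPolyModOP m x (n + 2) =
      stepDescPochhammer (m : ℝ) (k + 1) * geomPolyModOP m x (n + 1) +
        C (m * k - (2 * (n + 2) * x + (n + 1) * m)) *
          (stepDescPochhammer (m : ℝ) k * geomPolyModOP m x (n + 1)) -
        C ((n + 1) * (n + 2) * x * (x + m)) *
          (stepDescPochhammer (m : ℝ) k * geomPolyModOP m x n) := by
  rw [geomPolyModOP, map_sub]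
  linear_combination geomPolyModOP m x (n + 1) * X_mul_stepDescPochhammer (m : ℝ) k

theorem map_stepDescPochhammer_mul_geomPolyModOP (L : ℝ[X] →ₗ[ℝ] ℝ)
    (hL : ∀ k, L (stepDescPochhammer (m : ℝ) k) = (k + 1).factorial * x ^ k) (n k : ℕ) :
    L (stepDescPochhammer (m : ℝ) k * geomPolyModOP m x n) =
      (k + 1).factorial * k.descFactorial n * x ^ k * (x + m) ^ n := by
  induction n using Nat.twoStepInduction generalizing k with
  | zero => simp [geomPolyModOP, hL]
  | one =>
    have hpoly : stepDescPochhammer (m : ℝ) k * geomPolyModOP m x 1 =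
        stepDescPochhammer (m : ℝ) (k + 1) + C (m * k - 2 * x) * stepDescPochhammer (m : ℝ) k := by
      rw [geomPolyModOP, map_sub]
      linear_combination X_mul_stepDescPochhammer (m : ℝ) k
    rw [hpoly, map_add, L.map_C_mul, hL, hL, Nat.factorial_succ (k + 1), Nat.descFactorial_one]
    push_cast
    ring
  | more n ih₀ ih₁ =>
    rw [stepDescPochhammer_mul_geomPolyModOP_add_two, map_sub, map_add, L.map_C_mul,
      L.map_C_mul, ih₀, ih₁, ih₁, Nat.factorial_succ (k + 1), Nat.succ_descFactorial_succ]
    simp only [Nat.cast_descFactorial_succ]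
    push_cast
    ring

theorem natDegree_geomPolyModOP_le (n : ℕ) : (geomPolyModOP m x n).natDegree ≤ n := by
  induction n using Nat.twoStepInduction with
  | zero => simp [geomPolyModOP]
  | one => exact natDegree_X_sub_C_le _
  | more n ih₀ ih₁ =>
    rw [geomPolyModOP]
    refine (natDegree_sub_le _ _).trans (max_le ?_ ?_)
    · exact (natDegree_mul_le_of_le (natDegree_X_sub_C_le _) ih₁).trans (by omega)
    · exact (natDegree_C_mul_le _ _).trans (ih₀.trans (by omega))

theorem map_mul_geomPolyModOP_of_natDegree_lt (L : ℝ[X] →ₗ[ℝ] ℝ)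
    (hL : ∀ k, L (stepDescPochhammer (m : ℝ) k) = (k + 1).factorial * x ^ k)
    {P : ℝ[X]} {n : ℕ} (hP : P.natDegree < n) : L (P * geomPolyModOP m x n) = 0 := by
  refine map_eq_zero_of_mem_degreeLT (n := n) (m : ℝ)
    (L ∘ₗ LinearMap.mulRight ℝ (geomPolyModOP m x n)) (fun k hk => ?_)
    (mem_degreeLT.mpr (degree_le_natDegree.trans_lt (by exact_mod_cast hP)))
  rw [LinearMap.comp_apply, LinearMap.mulRight_apply,
    map_stepDescPochhammer_mul_geomPolyModOP m x L hL, Nat.descFactorial_of_lt hk, Nat.cast_zero,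
    mul_zero, zero_mul, zero_mul]

end GeomPolyModOP

theorem geomPolyMod_moments_general (m : ℕ) (x : ℝ)
    (L : Polynomial ℝ →ₗ[ℝ] ℝ)
    (hL : ∀ n : ℕ, L (Polynomial.X ^ n) = geomPolyMod n x m) :
    ∀ i j : ℕ, i ≠ j → L (geomPolyModOP m x i * geomPolyModOP m x j) = 0 := by
  have hV : ∀ k, L (stepDescPochhammer (m : ℝ) k) = (k + 1).factorial * x ^ k :=
    map_stepDescPochhammer_of_map_X_pow (m : ℝ) L _ fun n => by
      rw [hL, geomPolyMod_eq_sum_stirlingSecond]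
  have horth : ∀ i j, i < j → L (geomPolyModOP m x i * geomPolyModOP m x j) = 0 :=
    fun i j hij => map_mul_geomPolyModOP_of_natDegree_lt m x L hV
      ((natDegree_geomPolyModOP_le m x i).trans_lt hij)
  intro i j hij
  rcases hij.lt_or_gt with hlt | hgt
  · exact horth i j hlt
  · rw [mul_comm]
    exact horth j i hgt

/-- The modified bivariate geometric polynomials `ω̃_n(x,m)` are the moments of the
orthogonal family `R_n`. -/
theorem geomPolyMod_moments (m : ℕ) (hm : 0 < m) (x : ℝ)
    (L : Polynomial ℝ →ₗ[ℝ] ℝ)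
    (hL : ∀ n : ℕ, L (Polynomial.X ^ n) = geomPolyMod n x m) :
    ∀ i j : ℕ, i ≠ j → L (geomPolyModOP m x i * geomPolyModOP m x j) = 0 :=
  geomPolyMod_moments_general m x L hL
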